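/- Let g : U → ℂ be holomorphic with fixed point z₀, |g'(z₀)| = 1, satisfying the local log-Lipschitz bound on |g'| at z₀. Then for every δ > 0 there exist λ ∈ (0,1) and r₀ > 0 such that for all n large enough, with rₙ = r₀·exp(−nδ) and B = B(z₀, rₙ), for all i = 1,…,n and all x, y ∈ B: |(g^i)'(x)/(g^i)'(y) − 1| ≤ λⁿ (small complex distortion of the iterates on exponentially small discs). -/

import Mathlib

open Metric Function Filter
open scoped NNReal Topology

/-!
Near `z₀`, `g'` is Lipschitz and `|g'| ≥ 1/2`, and the log-Lipschitz bound gives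
`|g'| ≤ exp (2 L r)` on `B(z₀, 2r)`; so while `2 L n r ≤ log 2`, orbits of length `n` started in
`B(z₀, r)` stay in `B(z₀, 2r)` and are at most doubled in mutual distance. By the chain rule
`(gⁱ)'(x) / (gⁱ)'(y) = ∏ₖ g'(gᵏ x) / g'(gᵏ y)`, each factor is `O(r)`-close to `1`, hence the
quotient is `O(n r)`-close to `1`. For `r = r₀ e^{-nδ}` one has `n r = o(e^{-nδ/2})`, so
`λ = e^{-δ/2}` works.
-/

lemma Finset.norm_prod_sub_one_le_two_mul_sum {ι R : Type*} [NormedCommRing R] [NormOneClass R]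
    (s : Finset ι) (a : ι → R) (h : ∑ i ∈ s, ‖a i - 1‖ ≤ 1) :
    ‖∏ i ∈ s, a i - 1‖ ≤ 2 * ∑ i ∈ s, ‖a i - 1‖ := by
  have hsum : 0 ≤ ∑ i ∈ s, ‖a i - 1‖ := by positivity
  have hexp := Real.abs_exp_sub_one_le (x := ∑ i ∈ s, ‖a i - 1‖) (by rwa [abs_of_nonneg hsum])
  rw [abs_of_nonneg hsum] at hexp
  simpa only [add_sub_cancel] using
    (s.norm_prod_one_add_sub_one_le (fun i ↦ a i - 1)).trans ((le_abs_self _).trans hexp)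

section IterateBall

variable {X : Type*} [PseudoMetricSpace X] {g : X → X} {z₀ : X} {A R ρ : ℝ} {n : ℕ}

lemma iterate_mapsTo_closedBall_pow_mul (hfix : g z₀ = z₀) (hA : 1 ≤ A) (hρ : A ^ n * ρ ≤ R)
    (hg : ∀ u ∈ closedBall z₀ R, ∀ v ∈ closedBall z₀ R, dist (g u) (g v) ≤ A * dist u v) :
    ∀ j ≤ n, Set.MapsTo g^[j] (closedBall z₀ ρ) (closedBall z₀ (A ^ j * ρ)) := by
  intro j
  induction j with
  | zero => intro _; simpa using Set.mapsTo_id _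
  | succ j ih =>
    intro hj x hx
    have hρ0 : 0 ≤ ρ := dist_nonneg.trans hx
    have hjx : g^[j] x ∈ closedBall z₀ (A ^ j * ρ) := ih (by omega) hx
    have hjR : g^[j] x ∈ closedBall z₀ R :=
      closedBall_subset_closedBall (le_trans (by gcongr; omega) hρ) hjx
    rw [iterate_succ_apply', mem_closedBall]
    calc dist (g (g^[j] x)) z₀ = dist (g (g^[j] x)) (g z₀) := by rw [hfix]
      _ ≤ A * dist (g^[j] x) z₀ := hg _ hjR _ (mem_closedBall_self (dist_nonneg.trans hjR))
      _ ≤ A * (A ^ j * ρ) := mul_le_mul_of_nonneg_left hjx (by linarith)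
      _ = A ^ (j + 1) * ρ := by ring

lemma iterate_mapsTo_closedBall (hfix : g z₀ = z₀) (hA : 1 ≤ A) (hρ : A ^ n * ρ ≤ R)
    (hg : ∀ u ∈ closedBall z₀ R, ∀ v ∈ closedBall z₀ R, dist (g u) (g v) ≤ A * dist u v)
    {j : ℕ} (hj : j ≤ n) : Set.MapsTo g^[j] (closedBall z₀ ρ) (closedBall z₀ R) := fun x hx ↦
  closedBall_subset_closedBall (le_trans (by have := dist_nonneg.trans hx; gcongr) hρ)
    (iterate_mapsTo_closedBall_pow_mul hfix hA hρ hg j hj hx)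

lemma dist_iterate_le (hfix : g z₀ = z₀) (hA : 1 ≤ A) (hρ : A ^ n * ρ ≤ R)
    (hg : ∀ u ∈ closedBall z₀ R, ∀ v ∈ closedBall z₀ R, dist (g u) (g v) ≤ A * dist u v)
    {x y : X} (hx : x ∈ closedBall z₀ ρ) (hy : y ∈ closedBall z₀ ρ) :
    ∀ j ≤ n, dist (g^[j] x) (g^[j] y) ≤ A ^ j * dist x y := by
  intro j
  induction j with
  | zero => simp
  | succ j ih =>
    intro hj
    rw [iterate_succ_apply', iterate_succ_apply']
    calc dist (g (g^[j] x)) (g (g^[j] y)) ≤ A * dist (g^[j] x) (g^[j] y) :=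
          hg _ (iterate_mapsTo_closedBall hfix hA hρ hg (by omega) hx)
            _ (iterate_mapsTo_closedBall hfix hA hρ hg (by omega) hy)
      _ ≤ A * (A ^ j * dist x y) := mul_le_mul_of_nonneg_left (ih (by omega)) (by linarith)
      _ = A ^ (j + 1) * dist x y := by ring

end IterateBall

lemma hasDerivAt_iterate_of_differentiableAt {𝕜 : Type*} [NontriviallyNormedField 𝕜]
    {g : 𝕜 → 𝕜} {x : 𝕜} {i : ℕ} (hg : ∀ k < i, DifferentiableAt 𝕜 g (g^[k] x)) :
    HasDerivAt g^[i] (∏ k ∈ Finset.range i, deriv g (g^[k] x)) x := by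
  induction i with
  | zero => simpa using hasDerivAt_id x
  | succ i ih =>
    rw [iterate_succ', Finset.prod_range_succ, mul_comm]
    exact (hg i (by omega)).hasDerivAt.comp x (ih fun k hk ↦ hg k (by omega))

lemma norm_deriv_iterate_div_sub_one_le {𝕜 : Type*} [RCLike 𝕜] {g : 𝕜 → 𝕜} {z₀ : 𝕜}
    {r A c : ℝ} {K : ℝ≥0} {n : ℕ} (hfix : g z₀ = z₀)
    (hdiff : ∀ w ∈ closedBall z₀ (2 * r), DifferentiableAt 𝕜 g w)
    (hA : ∀ w ∈ closedBall z₀ (2 * r), ‖deriv g w‖ ≤ A) (hA1 : 1 ≤ A) (hAn : A ^ n ≤ 2)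
    (hc : 0 < c) (hlow : ∀ w ∈ closedBall z₀ (2 * r), c ≤ ‖deriv g w‖)
    (hK : LipschitzOnWith K (deriv g) (closedBall z₀ (2 * r))) (hsmall : 4 * K * n * r ≤ c)
    {i : ℕ} (hi : i ≤ n) {x y : 𝕜} (hx : x ∈ closedBall z₀ r) (hy : y ∈ closedBall z₀ r) :
    ‖deriv g^[i] x / deriv g^[i] y - 1‖ ≤ 8 * K * n * r / c := by
  have hr : 0 ≤ r := dist_nonneg.trans hx
  have hρ : A ^ n * r ≤ 2 * r := mul_le_mul_of_nonneg_right hAn hr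
  have hlip : ∀ u ∈ closedBall z₀ (2 * r), ∀ v ∈ closedBall z₀ (2 * r),
      dist (g u) (g v) ≤ A * dist u v := fun u hu v hv ↦ by
    simpa only [dist_eq_norm] using
      (convex_closedBall z₀ (2 * r)).norm_image_sub_le_of_norm_deriv_le hdiff hA hv hu
  have hmaps {k : ℕ} (hk : k ≤ n) := iterate_mapsTo_closedBall hfix hA1 hρ hlip hk
  have hderiv {w : 𝕜} (hw : w ∈ closedBall z₀ r) :
      deriv g^[i] w = ∏ k ∈ Finset.range i, deriv g (g^[k] w) :=
    (hasDerivAt_iterate_of_differentiableAt fun k hk ↦ hdiff _ (hmaps (by omega) hw)).deriv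
  have hstep : ∀ k ∈ Finset.range i,
      ‖deriv g (g^[k] x) / deriv g (g^[k] y) - 1‖ ≤ 4 * K * r / c := by
    intro k hk
    have hkn : k ≤ n := by rw [Finset.mem_range] at hk; omega
    have hlowy := hlow _ (hmaps hkn hy)
    have hdist : ‖g^[k] x - g^[k] y‖ ≤ 4 * r := by
      have hxy : dist x y ≤ 2 * r := by
        linarith [dist_triangle_right x y z₀, mem_closedBall.mp hx, mem_closedBall.mp hy]
      rw [← dist_eq_norm]
      calc dist (g^[k] x) (g^[k] y) ≤ A ^ k * dist x y :=
            dist_iterate_le hfix hA1 hρ hlip hx hy k hkn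
        _ ≤ 2 * (2 * r) :=
          mul_le_mul ((pow_le_pow_right₀ hA1 hkn).trans hAn) hxy dist_nonneg zero_le_two
        _ = 4 * r := by ring
    rw [div_sub_one (norm_pos_iff.mp (hc.trans_le hlowy)), norm_div]
    refine div_le_div₀ (by positivity) ?_ hc hlowy
    calc ‖deriv g (g^[k] x) - deriv g (g^[k] y)‖ ≤ K * ‖g^[k] x - g^[k] y‖ :=
          hK.norm_sub_le (hmaps hkn hx) (hmaps hkn hy)
      _ ≤ K * (4 * r) := by gcongr
      _ = 4 * K * r := by ring
  have hsum : ∑ k ∈ Finset.range i, ‖deriv g (g^[k] x) / deriv g (g^[k] y) - 1‖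
      ≤ n * (4 * K * r / c) := by
    refine (Finset.sum_le_card_nsmul _ _ _ hstep).trans ?_
    rw [Finset.card_range, nsmul_eq_mul]
    gcongr
  rw [hderiv hx, hderiv hy, ← Finset.prod_div_distrib]
  calc _ ≤ 2 * ∑ k ∈ Finset.range i, ‖deriv g (g^[k] x) / deriv g (g^[k] y) - 1‖ :=
        Finset.norm_prod_sub_one_le_two_mul_sum _ _ <| hsum.trans <| by
          rw [mul_div_assoc', div_le_one hc]; linarith
    _ ≤ 2 * (n * (4 * K * r / c)) := by gcongr
    _ = 8 * K * n * r / c := by ring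

lemma Real.le_exp_of_abs_log_le {x b : ℝ} (h : |Real.log x| ≤ b) : x ≤ Real.exp b :=
  (Real.le_exp_log x).trans (Real.exp_le_exp.mpr ((le_abs_self _).trans h))

lemma exists_closedBall_lipschitzOnWith_deriv {𝕜 : Type*} [RCLike 𝕜] {g : 𝕜 → 𝕜} {z₀ : 𝕜}
    {t : Set 𝕜} (ht : t ∈ 𝓝 z₀) (hg : AnalyticAt 𝕜 g z₀) {c : ℝ} (hc : c < ‖deriv g z₀‖) :
    ∃ R > 0, ∃ K : ℝ≥0, closedBall z₀ R ⊆ t ∧ LipschitzOnWith K (deriv g) (closedBall z₀ R) ∧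
      ∀ w ∈ closedBall z₀ R, DifferentiableAt 𝕜 g w ∧ c ≤ ‖deriv g w‖ := by
  obtain ⟨K, s, hs, hK⟩ := (hg.deriv.contDiffAt (n := 1)).exists_lipschitzOnWith
  have hev : ∀ᶠ w in 𝓝 z₀, DifferentiableAt 𝕜 g w ∧ c < ‖deriv g w‖ :=
    (hg.eventually_analyticAt.mono fun w hw ↦ hw.differentiableAt).and
      (hg.deriv.continuousAt.norm.eventually (lt_mem_nhds hc))
  obtain ⟨R, hR, hRsub⟩ := nhds_basis_closedBall.mem_iff.mp (inter_mem (inter_mem ht hs) hev)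
  exact ⟨R, hR, K, fun w hw ↦ (hRsub hw).1.1, hK.mono fun w hw ↦ (hRsub hw).1.2,
    fun w hw ↦ ⟨(hRsub hw).2.1, (hRsub hw).2.2.le⟩⟩

-- `exp (-nδ) = λⁿ λⁿ` with `λ = exp (-δ/2)`, and `n λⁿ → 0` absorbs the constant.
lemma eventually_mul_natCast_mul_exp_neg_le (C r₀ : ℝ) {δ : ℝ} (hδ : 0 < δ) :
    ∀ᶠ n : ℕ in atTop, C * (n * (r₀ * Real.exp (-(n:ℝ) * δ))) ≤ Real.exp (-(δ / 2)) ^ n := by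
  set lam := Real.exp (-(δ / 2))
  have hlam1 : lam < 1 := Real.exp_lt_one_iff.mpr (by linarith)
  filter_upwards [((tendsto_self_mul_const_pow_of_lt_one (Real.exp_pos _).le hlam1).const_mul
    (r₀ * C)).eventually (ge_mem_nhds (by rw [mul_zero]; exact one_pos))] with n hn
  have hexp : Real.exp (-(n:ℝ) * δ) = lam ^ n * lam ^ n := by
    rw [← mul_pow, ← Real.exp_add, ← Real.exp_nat_mul]; ring_nf
  calc C * (n * (r₀ * Real.exp (-(n:ℝ) * δ))) = r₀ * C * (n * lam ^ n) * lam ^ n := by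
        rw [hexp]; ring
    _ ≤ 1 * lam ^ n := by gcongr
    _ = lam ^ n := one_mul _

/-- small complex distortion of iterates on exponentially small discs. -/
theorem stmt_2 (U : Set ℂ) (hU : IsOpen U) (g : ℂ → ℂ)
    (hg : DifferentiableOn ℂ g U) (z₀ : ℂ) (hz₀ : z₀ ∈ U) (hfix : g z₀ = z₀)
    (hder : ‖deriv g z₀‖ = 1) (L η : ℝ) (hL : 0 < L) (hη : 0 < η)
    (hlip : ∀ x ∈ ball z₀ η, |Real.log ‖deriv g x‖| ≤ L * ‖x - z₀‖) :
    ∀ δ > (0:ℝ), ∃ lam : ℝ, 0 < lam ∧ lam < 1 ∧ ∃ r₀ > (0:ℝ), ∃ n₀ : ℕ,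
      ∀ n ≥ n₀, ∀ i : ℕ, 1 ≤ i → i ≤ n →
        ∀ x ∈ ball z₀ (r₀ * Real.exp (-(n:ℝ) * δ)),
        ∀ y ∈ ball z₀ (r₀ * Real.exp (-(n:ℝ) * δ)),
          ‖deriv (g^[i]) x / deriv (g^[i]) y - 1‖ ≤ lam ^ n := by
  intro δ hδ
  obtain ⟨R, hR, K, hRη, hK, hgR⟩ := exists_closedBall_lipschitzOnWith_deriv
    (ball_mem_nhds z₀ hη) (hg.analyticOnNhd hU z₀ hz₀) (c := 1 / 2) (by rw [hder]; norm_num)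
  set lam := Real.exp (-(δ / 2))
  obtain ⟨n₀, hn₀⟩ := eventually_atTop.mp <|
    (eventually_mul_natCast_mul_exp_neg_le (16 * K) (R / 2) hδ).and
      (eventually_mul_natCast_mul_exp_neg_le (2 * L / Real.log 2) (R / 2) hδ)
  refine ⟨lam, Real.exp_pos _, Real.exp_lt_one_iff.mpr (by linarith), R / 2, by positivity, n₀,
    fun n hn i _ hin x hx y hy ↦ ?_⟩
  set r := R / 2 * Real.exp (-(n:ℝ) * δ) with hr
  have hK16 : 16 * K * (n * r) ≤ lam ^ n := (hn₀ n hn).1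
  have hL2 : 2 * L / Real.log 2 * (n * r) ≤ lam ^ n := (hn₀ n hn).2
  have hlamn : lam ^ n ≤ 1 :=
    pow_le_one₀ (Real.exp_pos _).le (Real.exp_le_one_iff.mpr (by linarith))
  have hlog : 2 * L * n * r ≤ Real.log 2 := by
    have := hL2.trans hlamn
    rw [div_mul_eq_mul_div, div_le_one (Real.log_pos one_lt_two)] at this
    linarith
  have h2r : closedBall z₀ (2 * r) ⊆ closedBall z₀ R := closedBall_subset_closedBall <| by
    have : Real.exp (-(n:ℝ) * δ) ≤ 1 :=
      Real.exp_le_one_iff.mpr (by nlinarith [n.cast_nonneg (α := ℝ)])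
    rw [hr]; nlinarith
  have hnorm (w) (hw : w ∈ closedBall z₀ (2 * r)) : ‖deriv g w‖ ≤ Real.exp (2 * L * r) :=
    Real.le_exp_of_abs_log_le <| (hlip w (hRη (h2r hw))).trans <| by
      rw [mem_closedBall, dist_eq_norm] at hw; nlinarith
  have hAn : Real.exp (2 * L * r) ^ n ≤ 2 := by
    rw [← Real.exp_nat_mul]
    exact (Real.exp_le_exp.mpr (by linarith)).trans_eq (Real.exp_log two_pos)
  calc ‖deriv g^[i] x / deriv g^[i] y - 1‖ ≤ 8 * K * n * r / (1 / 2) :=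
        norm_deriv_iterate_div_sub_one_le hfix (fun w hw ↦ (hgR w (h2r hw)).1) hnorm
          (Real.one_le_exp (by positivity)) hAn one_half_pos (fun w hw ↦ (hgR w (h2r hw)).2)
          (hK.mono h2r) (by linarith) hin (ball_subset_closedBall hx) (ball_subset_closedBall hy)
    _ ≤ lam ^ n := by linarith
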